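/- arXiv:1902.05157 — 3 statements merged into one kernel-verified Lean document; each statement's English description precedes it below -/
import Mathlib

section
/- Let A be an SPD matrix partitioned in 2×2 block form with blocks A_ff, A_fc, A_cf, A_cc, let R = [0 I], and let P_ideal = [−A_ff⁻¹A_fc ; I]. Then among all interpolation operators P = [W ; I], the choice W = −A_ff⁻¹A_fc (i.e. P = P_ideal) minimizes sup_{v≠0} ‖(I − PR)v‖²/‖v‖_A². -/
open Matrix

/-- Interpolation operator `P = [W ; I]` in CF block form. -/
noncomputable def Pmat {nf nc : ℕ} (W : Matrix (Fin nf) (Fin nc) ℝ) :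
    Matrix (Fin nf ⊕ Fin nc) (Fin nc) ℝ :=
  Matrix.of fun i j => Sum.elim (fun i₁ => W i₁ j) (fun i₂ => if i₂ = j then (1 : ℝ) else 0) i

/-- Restriction operator `R = [0 I]` in CF block form. -/
noncomputable def Rmat {nf nc : ℕ} : Matrix (Fin nc) (Fin nf ⊕ Fin nc) ℝ :=
  Matrix.of fun j i => Sum.elim (fun _ => (0 : ℝ)) (fun i₂ => if i₂ = j then (1 : ℝ) else 0) i

/-- The `A`-norm of a vector, `‖v‖_A = √(vᵀ A v)`. -/
noncomputable def anorm {m : Type*} [Fintype m] (A : Matrix m m ℝ) (v : m → ℝ) : ℝ :=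
  Real.sqrt (v ⬝ᵥ A.mulVec v)

/-- The operator norm of a matrix `E` induced by the `A`-norm. -/
noncomputable def opNormA {m : Type*} [Fintype m] (A E : Matrix m m ℝ) : ℝ :=
  ⨆ v : {v : m → ℝ // v ≠ 0}, anorm A (E.mulVec v) / anorm A v

/-- The sharp (squared) ratio `sup_v ‖(I - P R)v‖² / ‖v‖_A²` for `P = [W ; I]`. -/
noncomputable def supRatio {nf nc : ℕ} (A : Matrix (Fin nf ⊕ Fin nc) (Fin nf ⊕ Fin nc) ℝ)
    (W : Matrix (Fin nf) (Fin nc) ℝ) : ℝ :=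
  ⨆ v : {v : Fin nf ⊕ Fin nc → ℝ // v ≠ 0},
    ((((1 : Matrix (Fin nf ⊕ Fin nc) (Fin nf ⊕ Fin nc) ℝ) - Pmat W * Rmat).mulVec v) ⬝ᵥ (((1 : Matrix (Fin nf ⊕ Fin nc) (Fin nf ⊕ Fin nc) ℝ) - Pmat W * Rmat).mulVec v)) /
      (v ⬝ᵥ A.mulVec v)

private lemma dot_self_nonneg' {m : Type*} [Fintype m] (x : m → ℝ) : 0 ≤ x ⬝ᵥ x :=
  Finset.sum_nonneg fun _ _ => mul_self_nonneg _

private lemma mulVec_dot_le' {m n : Type*} [Fintype m] [Fintype n] (M : Matrix m n ℝ)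
    (x : n → ℝ) : (M *ᵥ x) ⬝ᵥ (M *ᵥ x) ≤ (∑ i, ∑ j, M i j ^ 2) * (x ⬝ᵥ x) := by
  have hx : x ⬝ᵥ x = ∑ j, x j ^ 2 := by simp [dotProduct, sq]
  rw [hx, dotProduct, Finset.sum_mul]
  refine Finset.sum_le_sum fun i _ => ?_
  have h := Finset.sum_mul_sq_le_sq_mul_sq Finset.univ (fun j => M i j) x
  calc (M *ᵥ x) i * (M *ᵥ x) i = (∑ j, M i j * x j) ^ 2 := by
        simp [mulVec, dotProduct, sq]
    _ ≤ (∑ j, M i j ^ 2) * ∑ j, x j ^ 2 := h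

private lemma mulVec_dot_bound' {m n : Type*} [Fintype m] [Fintype n] (M : Matrix m n ℝ) :
    ∃ k : ℝ, 0 ≤ k ∧ ∀ x : n → ℝ, (M *ᵥ x) ⬝ᵥ (M *ᵥ x) ≤ k * (x ⬝ᵥ x) :=
  ⟨∑ i, ∑ j, M i j ^ 2,
    Finset.sum_nonneg fun _ _ => Finset.sum_nonneg fun _ _ => sq_nonneg _,
    fun x => mulVec_dot_le' M x⟩

private lemma posdef_dot_bound' {m : Type*} [Fintype m] [DecidableEq m] {B : Matrix m m ℝ}
    (hB : B.PosDef) : ∃ c : ℝ, 0 < c ∧ ∀ x : m → ℝ, x ⬝ᵥ x ≤ c * (x ⬝ᵥ B *ᵥ x) := by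
  open scoped MatrixOrder in
  set S := CFC.sqrt B with hSdef
  open scoped MatrixOrder in
  have hSh : S.IsHermitian := (CFC.sqrt_nonneg B).posSemidef.1
  open scoped MatrixOrder in
  have hSS : S * S = B := CFC.sqrt_mul_sqrt_self B hB.posSemidef.nonneg
  have hST : Sᵀ = S := by
    ext i j
    conv_rhs => rw [← hSh.eq]
    simp [conjTranspose_apply]
  have hdet : IsUnit S.det := by
    have h1 : S.det * S.det = B.det := by rw [← det_mul, hSS]
    have h2 : S.det ≠ 0 := by
      intro h
      rw [h, mul_zero] at h1
      exact hB.det_pos.ne' h1.symm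
    exact isUnit_iff_ne_zero.mpr h2
  have hSinvT : (S⁻¹)ᵀ = S⁻¹ := by rw [transpose_nonsing_inv, hST]
  refine ⟨(∑ i, ∑ j, (S⁻¹) i j ^ 2) + 1, by positivity, fun x => ?_⟩
  set k := ∑ i, ∑ j, (S⁻¹) i j ^ 2 with hk
  have hk0 : 0 ≤ k := Finset.sum_nonneg fun i _ => Finset.sum_nonneg fun j _ => sq_nonneg _
  have hx1 : x ⬝ᵥ x = (S⁻¹ *ᵥ x) ⬝ᵥ (S *ᵥ x) := by
    calc x ⬝ᵥ x = x ⬝ᵥ ((S⁻¹ * S) *ᵥ x) := by rw [nonsing_inv_mul _ hdet, one_mulVec]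
      _ = x ⬝ᵥ (S⁻¹ *ᵥ (S *ᵥ x)) := by rw [← mulVec_mulVec]
      _ = (x ᵥ* S⁻¹) ⬝ᵥ (S *ᵥ x) := dotProduct_mulVec _ _ _
      _ = (S⁻¹ *ᵥ x) ⬝ᵥ (S *ᵥ x) := by rw [← mulVec_transpose, hSinvT]
  have hx2 : (S *ᵥ x) ⬝ᵥ (S *ᵥ x) = x ⬝ᵥ B *ᵥ x := by
    calc (S *ᵥ x) ⬝ᵥ (S *ᵥ x) = ((S *ᵥ x) ᵥ* S) ⬝ᵥ x := dotProduct_mulVec _ _ _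
      _ = (Sᵀ *ᵥ (S *ᵥ x)) ⬝ᵥ x := by rw [mulVec_transpose]
      _ = (B *ᵥ x) ⬝ᵥ x := by rw [hST, mulVec_mulVec, hSS]
      _ = x ⬝ᵥ B *ᵥ x := dotProduct_comm _ _
  have hcs : ((S⁻¹ *ᵥ x) ⬝ᵥ (S *ᵥ x)) ^ 2
      ≤ ((S⁻¹ *ᵥ x) ⬝ᵥ (S⁻¹ *ᵥ x)) * ((S *ᵥ x) ⬝ᵥ (S *ᵥ x)) := by
    have h := Finset.sum_mul_sq_le_sq_mul_sq Finset.univ (S⁻¹ *ᵥ x) (S *ᵥ x)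
    simpa [dotProduct, sq] using h
  have hL1 := mulVec_dot_le' S⁻¹ x
  have hb0 : 0 ≤ x ⬝ᵥ B *ᵥ x := by rw [← hx2]; exact dot_self_nonneg' _
  have key : (x ⬝ᵥ x) ^ 2 ≤ k * (x ⬝ᵥ x) * (x ⬝ᵥ B *ᵥ x) := by
    calc (x ⬝ᵥ x) ^ 2 = ((S⁻¹ *ᵥ x) ⬝ᵥ (S *ᵥ x)) ^ 2 := by rw [hx1]
      _ ≤ ((S⁻¹ *ᵥ x) ⬝ᵥ (S⁻¹ *ᵥ x)) * ((S *ᵥ x) ⬝ᵥ (S *ᵥ x)) := hcs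
      _ ≤ (k * (x ⬝ᵥ x)) * (x ⬝ᵥ B *ᵥ x) := by
          rw [hx2]
          exact mul_le_mul_of_nonneg_right hL1 hb0
      _ = k * (x ⬝ᵥ x) * (x ⬝ᵥ B *ᵥ x) := by ring
  rcases (dot_self_nonneg' x).eq_or_lt with h0 | h0
  · rw [← h0]; positivity
  · have h1 : (x ⬝ᵥ x) * (x ⬝ᵥ x) ≤ ((k + 1) * (x ⬝ᵥ B *ᵥ x)) * (x ⬝ᵥ x) := by
      nlinarith [key, hb0]
    exact le_of_mul_le_mul_right h1 h0

private lemma PR_eq' {nf nc : ℕ} (W : Matrix (Fin nf) (Fin nc) ℝ) :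
    Pmat W * (Rmat (nf := nf)) = fromBlocks 0 W 0 (1 : Matrix (Fin nc) (Fin nc) ℝ) := by
  refine (show Pmat W * (Rmat (nf := nf) (nc := nc)) = fromBlocks 0 W 0 1 by
  ext i j
  cases i <;> cases j <;>
    simp [Pmat, Rmat, mul_apply, fromBlocks, one_apply, eq_comm])

private lemma E_eq' {nf nc : ℕ} (W : Matrix (Fin nf) (Fin nc) ℝ) :
    (1 : Matrix (Fin nf ⊕ Fin nc) (Fin nf ⊕ Fin nc) ℝ) - Pmat W * Rmat
      = fromBlocks 1 (-W) 0 0 := by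
  rw [PR_eq', ← fromBlocks_one]
  ext i j
  cases i <;> cases j <;> simp [fromBlocks]

private lemma E_mulVec' {nf nc : ℕ} (W : Matrix (Fin nf) (Fin nc) ℝ)
    (v : Fin nf ⊕ Fin nc → ℝ) :
    ((1 : Matrix (Fin nf ⊕ Fin nc) (Fin nf ⊕ Fin nc) ℝ) - Pmat W * Rmat) *ᵥ v
      = Sum.elim ((v ∘ Sum.inl) - W *ᵥ (v ∘ Sum.inr)) 0 := by
  conv_lhs => rw [E_eq', ← Sum.elim_comp_inl_inr v]
  rw [fromBlocks_mulVec]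
  simp [Sum.elim_comp_inl, Sum.elim_comp_inr, neg_mulVec, sub_eq_add_neg]

private lemma Aff_posDef' {nf nc : ℕ}
    {Aff : Matrix (Fin nf) (Fin nf) ℝ} {Afc : Matrix (Fin nf) (Fin nc) ℝ}
    {Acf : Matrix (Fin nc) (Fin nf) ℝ} {Acc : Matrix (Fin nc) (Fin nc) ℝ}
    (hA : (fromBlocks Aff Afc Acf Acc).PosDef) : Aff.PosDef := by
  have hh := (isHermitian_fromBlocks_iff.mp hA.1).1
  refine .of_dotProduct_mulVec_pos hh fun x hx => ?_
  have hv : (Sum.elim x 0 : Fin nf ⊕ Fin nc → ℝ) ≠ 0 := by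
    intro h
    exact hx (funext fun i => congrFun h (Sum.inl i))
  have := hA.dotProduct_mulVec_pos hv
  simpa [fromBlocks_mulVec, sumElim_dotProduct_sumElim, mulVec_zero] using this

private lemma denom_split' {nf nc : ℕ}
    {Aff : Matrix (Fin nf) (Fin nf) ℝ} {Afc : Matrix (Fin nf) (Fin nc) ℝ}
    {Acf : Matrix (Fin nc) (Fin nf) ℝ} {Acc : Matrix (Fin nc) (Fin nc) ℝ}
    (hA : (fromBlocks Aff Afc Acf Acc).PosDef) (v : Fin nf ⊕ Fin nc → ℝ) :
    v ⬝ᵥ (fromBlocks Aff Afc Acf Acc) *ᵥ v =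
      ((v ∘ Sum.inl) + (Aff⁻¹ * Afc) *ᵥ (v ∘ Sum.inr)) ⬝ᵥ
        Aff *ᵥ ((v ∘ Sum.inl) + (Aff⁻¹ * Afc) *ᵥ (v ∘ Sum.inr)) +
      (v ∘ Sum.inr) ⬝ᵥ (Acc - Acf * Aff⁻¹ * Afc) *ᵥ (v ∘ Sum.inr) := by
  have hiff := isHermitian_fromBlocks_iff.mp hA.1
  have hAcf : Acf = Afcᴴ := hiff.2.1.symm
  have hAff : Aff.PosDef := Aff_posDef' hA
  haveI : Invertible Aff := hAff.isUnit.invertible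
  have h := schur_complement_eq₁₁ Afc Acc (v ∘ Sum.inl) (v ∘ Sum.inr) hiff.1
  rw [← hAcf] at h
  have hv : (v ∘ Sum.inl) ⊕ᵥ (v ∘ Sum.inr) = v := Sum.elim_comp_inl_inr v
  rw [hv] at h
  simp only [star_trivial, hv] at h
  rw [dotProduct_mulVec, h]
  rw [dotProduct_mulVec, dotProduct_mulVec]

theorem ideal_interpolation_minimizes {nf nc : ℕ}
    (Aff : Matrix (Fin nf) (Fin nf) ℝ) (Afc : Matrix (Fin nf) (Fin nc) ℝ)
    (Acf : Matrix (Fin nc) (Fin nf) ℝ) (Acc : Matrix (Fin nc) (Fin nc) ℝ)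
    (hA : (Matrix.fromBlocks Aff Afc Acf Acc).PosDef) :
    ∀ W : Matrix (Fin nf) (Fin nc) ℝ,
      supRatio (Matrix.fromBlocks Aff Afc Acf Acc) (-(Aff⁻¹ * Afc))
        ≤ supRatio (Matrix.fromBlocks Aff Afc Acf Acc) W := by
  intro W
  have hiff := isHermitian_fromBlocks_iff.mp hA.1
  have hAcf : Acf = Afcᴴ := hiff.2.1.symm
  have hAff : Aff.PosDef := Aff_posDef' hA
  haveI : Invertible Aff := hAff.isUnit.invertible
  have hS : (Acc - Acf * Aff⁻¹ * Afc).PosSemidef := by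
    have hPS : (fromBlocks Aff Afc Afcᴴ Acc).PosSemidef := by
      rw [← hAcf]; exact hA.posSemidef
    have h := (PosDef.fromBlocks₁₁ Afc Acc hAff).mp hPS
    rwa [← hAcf] at h
  have hden : ∀ v : Fin nf ⊕ Fin nc → ℝ, v ≠ 0 →
      0 < v ⬝ᵥ (fromBlocks Aff Afc Acf Acc) *ᵥ v := fun v hv => by
    simpa using hA.dotProduct_mulVec_pos hv
  obtain ⟨cA, hcA, hbound⟩ := posdef_dot_bound' hA
  obtain ⟨kE, hkE0, hkE⟩ := mulVec_dot_bound'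
    ((1 : Matrix (Fin nf ⊕ Fin nc) (Fin nf ⊕ Fin nc) ℝ) - Pmat W * Rmat)
  have hbdd : BddAbove (Set.range fun v : {v : Fin nf ⊕ Fin nc → ℝ // v ≠ 0} =>
      ((((1 : Matrix (Fin nf ⊕ Fin nc) (Fin nf ⊕ Fin nc) ℝ) - Pmat W * Rmat).mulVec ↑v) ⬝ᵥ
        (((1 : Matrix (Fin nf ⊕ Fin nc) (Fin nf ⊕ Fin nc) ℝ) - Pmat W * Rmat).mulVec ↑v)) /
        (↑v ⬝ᵥ (fromBlocks Aff Afc Acf Acc).mulVec ↑v)) := by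
    refine ⟨kE * cA, ?_⟩
    rintro x ⟨⟨v, hv⟩, rfl⟩
    have h3 := hden v hv
    rw [div_le_iff₀ h3]
    calc _ ≤ kE * (v ⬝ᵥ v) := hkE v
      _ ≤ kE * (cA * (v ⬝ᵥ (fromBlocks Aff Afc Acf Acc) *ᵥ v)) :=
        mul_le_mul_of_nonneg_left (hbound v) hkE0
      _ = _ := by ring
  rcases isEmpty_or_nonempty {v : Fin nf ⊕ Fin nc → ℝ // v ≠ 0} with hempty | hne
  · unfold supRatio
    rw [Real.iSup_of_isEmpty, Real.iSup_of_isEmpty]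
  · unfold supRatio
    refine ciSup_le ?_
    rintro ⟨v, hv⟩
    have hnum : ((1 : Matrix (Fin nf ⊕ Fin nc) (Fin nf ⊕ Fin nc) ℝ)
          - Pmat (-(Aff⁻¹ * Afc)) * Rmat) *ᵥ v
        = Sum.elim ((v ∘ Sum.inl) + (Aff⁻¹ * Afc) *ᵥ (v ∘ Sum.inr)) 0 := by
      rw [E_mulVec', neg_mulVec, sub_neg_eq_add]
    set w : Fin nf → ℝ := (v ∘ Sum.inl) + (Aff⁻¹ * Afc) *ᵥ (v ∘ Sum.inr) with hwdef
    have hnumdot : (((1 : Matrix (Fin nf ⊕ Fin nc) (Fin nf ⊕ Fin nc) ℝ)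
          - Pmat (-(Aff⁻¹ * Afc)) * Rmat) *ᵥ v) ⬝ᵥ
        (((1 : Matrix (Fin nf ⊕ Fin nc) (Fin nf ⊕ Fin nc) ℝ)
          - Pmat (-(Aff⁻¹ * Afc)) * Rmat) *ᵥ v) = w ⬝ᵥ w := by
      rw [hnum, sumElim_dotProduct_sumElim, dotProduct_zero, add_zero]
    have hdsplit := denom_split' hA v
    have hSnn : 0 ≤ (v ∘ Sum.inr) ⬝ᵥ (Acc - Acf * Aff⁻¹ * Afc) *ᵥ (v ∘ Sum.inr) := by
      simpa using hS.dotProduct_mulVec_nonneg (v ∘ Sum.inr)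
    show _ / _ ≤ _
    rw [hnumdot, hdsplit, ← hwdef]
    by_cases hw0 : w = 0
    · rw [hw0]
      simp only [dotProduct_zero, zero_dotProduct, zero_div]
      refine le_trans ?_ (le_ciSup hbdd ⟨v, hv⟩)
      exact div_nonneg (dot_self_nonneg' _) (hden v hv).le
    · have hu : (Sum.elim w 0 : Fin nf ⊕ Fin nc → ℝ) ≠ 0 := by
        intro h
        exact hw0 (funext fun i => congrFun h (Sum.inl i))
      have hAffw : 0 < w ⬝ᵥ Aff *ᵥ w := by simpa using hAff.dotProduct_mulVec_pos hw0
      have hratio_u : ((((1 : Matrix (Fin nf ⊕ Fin nc) (Fin nf ⊕ Fin nc) ℝ)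
            - Pmat W * Rmat).mulVec (Sum.elim w 0)) ⬝ᵥ
          (((1 : Matrix (Fin nf ⊕ Fin nc) (Fin nf ⊕ Fin nc) ℝ)
            - Pmat W * Rmat).mulVec (Sum.elim w 0))) /
          ((Sum.elim w 0 : Fin nf ⊕ Fin nc → ℝ) ⬝ᵥ
            (fromBlocks Aff Afc Acf Acc).mulVec (Sum.elim w 0))
          = (w ⬝ᵥ w) / (w ⬝ᵥ Aff *ᵥ w) := by
        have h1 : ((1 : Matrix (Fin nf ⊕ Fin nc) (Fin nf ⊕ Fin nc) ℝ)
              - Pmat W * Rmat) *ᵥ (Sum.elim w 0) = Sum.elim w 0 := by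
          rw [E_mulVec']
          simp [Sum.elim_comp_inl, Sum.elim_comp_inr]
        have h2 := denom_split' hA (Sum.elim w 0)
        rw [h1, sumElim_dotProduct_sumElim, dotProduct_zero, add_zero, h2]
        simp [Sum.elim_comp_inl, Sum.elim_comp_inr]
      have hle : (w ⬝ᵥ w) / (w ⬝ᵥ Aff *ᵥ w
            + (v ∘ Sum.inr) ⬝ᵥ (Acc - Acf * Aff⁻¹ * Afc) *ᵥ (v ∘ Sum.inr))
          ≤ (w ⬝ᵥ w) / (w ⬝ᵥ Aff *ᵥ w) := by
        gcongr
        · exact dot_self_nonneg' _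
        · exact le_add_of_nonneg_right hSnn
      refine hle.trans ?_
      rw [← hratio_u]
      exact le_ciSup hbdd ⟨Sum.elim w 0, hu⟩
end

section
/- Let A be SPD in 2×2 block form as above and P = [W ; I]. Then for each column index j, minimizing ‖(P − P_ideal) e_j‖_A over the j-th column of W is equivalent to minimizing ‖P e_j‖_A: specifically, ‖(P − P_ideal)e_j‖_A² = ‖P e_j‖_A² − e_jᵀ S e_j, where S = A_cc − A_cf A_ff⁻¹ A_fc is the Schur complement, and the right-hand term is independent of W. -/
open Matrix

/-! With `v = A_ff⁻¹ A_fc x`, the ideal column is `[-v; x]`, so the defect `P x - P_ideal x` is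
`[W x + v; 0]`. Because `A_ff v = A_fc x` and `A_ff` is symmetric, expanding its energy gives
`‖P x‖_A² - xᵀ A_cc x + vᵀ A_ff v`, and `vᵀ A_ff v = xᵀ A_cf A_ff⁻¹ A_fc x`. -/

lemma Pmat_mulVec {nf nc : ℕ} (W : Matrix (Fin nf) (Fin nc) ℝ) (x : Fin nc → ℝ) :
    Pmat W *ᵥ x = Sum.elim (W *ᵥ x) x := by
  have hP : Pmat W = fromRows W 1 := by
    ext (i | i) j <;> simp [Pmat, one_apply]
  rw [hP, fromRows_mulVec, one_mulVec]

namespace Matrix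

variable {R m n : Type*} [CommRing R] [Fintype m] [Fintype n]

lemma sumElim_dotProduct_fromBlocks_mulVec_sumElim (A : Matrix m m R) (B : Matrix m n R)
    (D : Matrix n n R) (w : m → R) (x : n → R) :
    Sum.elim w x ⬝ᵥ fromBlocks A B Bᵀ D *ᵥ Sum.elim w x
      = w ⬝ᵥ A *ᵥ w + 2 * (w ⬝ᵥ B *ᵥ x) + x ⬝ᵥ D *ᵥ x := by
  rw [fromBlocks_mulVec, sumElim_dotProduct_sumElim, Sum.elim_comp_inl, Sum.elim_comp_inr,
    dotProduct_add, dotProduct_add, dotProduct_mulVec x Bᵀ, vecMul_transpose,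
    dotProduct_comm (B *ᵥ x)]
  ring

lemma IsSymm.dotProduct_mulVec_add_self {A : Matrix m m R} (hA : A.IsSymm) (u v : m → R) :
    (u + v) ⬝ᵥ A *ᵥ (u + v) = u ⬝ᵥ A *ᵥ u + 2 * (u ⬝ᵥ A *ᵥ v) + v ⬝ᵥ A *ᵥ v := by
  have hcross : v ⬝ᵥ A *ᵥ u = u ⬝ᵥ A *ᵥ v := by
    rw [dotProduct_mulVec, ← mulVec_transpose, hA.eq, dotProduct_comm]
  simp only [mulVec_add, dotProduct_add, add_dotProduct, hcross]
  ring

variable [DecidableEq m]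

lemma fromBlocks_energy_shift_eq_sub_schur {A : Matrix m m R} (hA : A.IsSymm)
    (hdet : IsUnit A.det) (B : Matrix m n R) (D : Matrix n n R) (w : m → R) (x : n → R) :
    Sum.elim (w + A⁻¹ *ᵥ B *ᵥ x) 0 ⬝ᵥ fromBlocks A B Bᵀ D *ᵥ Sum.elim (w + A⁻¹ *ᵥ B *ᵥ x) 0
      = Sum.elim w x ⬝ᵥ fromBlocks A B Bᵀ D *ᵥ Sum.elim w x
        - x ⬝ᵥ (D - Bᵀ * A⁻¹ * B) *ᵥ x := by
  set v := A⁻¹ *ᵥ B *ᵥ x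
  have hv : A *ᵥ v = B *ᵥ x := by
    rw [mulVec_mulVec, mul_nonsing_inv A hdet, one_mulVec]
  have hschur : x ⬝ᵥ (Bᵀ * A⁻¹ * B) *ᵥ x = v ⬝ᵥ A *ᵥ v := by
    rw [hv, ← mulVec_mulVec, ← mulVec_mulVec, dotProduct_mulVec, vecMul_transpose,
      dotProduct_comm]
  rw [sumElim_dotProduct_fromBlocks_mulVec_sumElim, sumElim_dotProduct_fromBlocks_mulVec_sumElim,
    hA.dotProduct_mulVec_add_self, sub_mulVec, dotProduct_sub, hschur, hv]
  simp only [mulVec_zero, dotProduct_zero]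
  ring

end Matrix

theorem column_energy_min_equiv_ideal {nf nc : ℕ}
    (Aff : Matrix (Fin nf) (Fin nf) ℝ) (Afc : Matrix (Fin nf) (Fin nc) ℝ)
    (Acc : Matrix (Fin nc) (Fin nc) ℝ)
    (hA : (Matrix.fromBlocks Aff Afc Afcᵀ Acc).PosDef)
    (W : Matrix (Fin nf) (Fin nc) ℝ) (j : Fin nc) :
    ((Pmat W - Pmat (-(Aff⁻¹ * Afc))).mulVec (Pi.single j 1)) ⬝ᵥ
        (Matrix.fromBlocks Aff Afc Afcᵀ Acc).mulVec
          ((Pmat W - Pmat (-(Aff⁻¹ * Afc))).mulVec (Pi.single j 1))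
      = ((Pmat W).mulVec (Pi.single j 1)) ⬝ᵥ
          (Matrix.fromBlocks Aff Afc Afcᵀ Acc).mulVec ((Pmat W).mulVec (Pi.single j 1))
        - (Pi.single j 1 : Fin nc → ℝ) ⬝ᵥ (Acc - Afcᵀ * Aff⁻¹ * Afc).mulVec (Pi.single j 1) := by
  have hAff : Aff.PosDef := hA.submatrix Sum.inl_injective
  have hdiff : (Pmat W - Pmat (-(Aff⁻¹ * Afc))) *ᵥ Pi.single j 1
      = Sum.elim (W *ᵥ Pi.single j 1 + Aff⁻¹ *ᵥ Afc *ᵥ Pi.single j 1) 0 := by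
    rw [sub_mulVec, Pmat_mulVec, Pmat_mulVec, ← Sum.elim_sub_sub, sub_self, neg_mulVec,
      sub_neg_eq_add, mulVec_mulVec]
  rw [hdiff, Pmat_mulVec]
  exact fromBlocks_energy_shift_eq_sub_schur (by simpa using hAff.isHermitian)
    ((isUnit_iff_isUnit_det Aff).mp hAff.isUnit) _ _ _ _
end

section
/- Let A be SPD, P = [W ; I], R = [0 I]. Then ‖PR‖_A² ≤ ‖A⁻¹‖₂ · tr(PᵀAP). -/
open Matrix

/-!
For every `v`, `‖PRv‖²_A = (Rv)ᵀ (PᵀAP) (Rv) ≤ tr(PᵀAP) ‖Rv‖² ≤ tr(PᵀAP) ‖v‖²`: a positive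
semidefinite matrix `BᵀB` satisfies `xᵀBᵀBx ≤ ‖B‖_F² ‖x‖² = tr(BᵀB) ‖x‖²`, and `R` only drops
coordinates. Finally `‖v‖² ≤ ‖A⁻¹‖₂ ‖v‖²_A`, by the Cauchy–Schwarz inequality for the `A`-inner
product applied to `v` and `A⁻¹v`: `‖v‖⁴ = ⟨v, A⁻¹v⟩_A² ≤ ‖v‖²_A ⟨v, A⁻¹v⟩ ≤ ‖v‖²_A ‖A⁻¹‖₂ ‖v‖²`.
-/

section DotProduct

variable {m n : Type*} [Fintype m] [Fintype n]

lemma dotProduct_self_nonneg (x : m → ℝ) : 0 ≤ x ⬝ᵥ x :=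
  Finset.sum_nonneg fun i _ => mul_self_nonneg (x i)

lemma dotProduct_sq_le_dotProduct_self_mul (x y : m → ℝ) :
    (x ⬝ᵥ y) ^ 2 ≤ (x ⬝ᵥ x) * (y ⬝ᵥ y) := by
  simpa only [dotProduct, pow_two] using Finset.sum_mul_sq_le_sq_mul_sq Finset.univ x y

lemma dotProduct_le_sqrt_mul_sqrt (x y : m → ℝ) :
    x ⬝ᵥ y ≤ √(x ⬝ᵥ x) * √(y ⬝ᵥ y) := by
  rw [← Real.sqrt_mul (dotProduct_self_nonneg x)]
  exact (le_abs_self _).trans (Real.abs_le_sqrt (dotProduct_sq_le_dotProduct_self_mul x y))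

lemma mulVec_dotProduct_mulVec_self_le (B : Matrix m n ℝ) (v : n → ℝ) :
    (B *ᵥ v) ⬝ᵥ (B *ᵥ v) ≤ (Bᵀ * B).trace * (v ⬝ᵥ v) := by
  have hrow : ∀ i, (B *ᵥ v) i ^ 2 ≤ (B i ⬝ᵥ B i) * (v ⬝ᵥ v) := fun i =>
    dotProduct_sq_le_dotProduct_self_mul (B i) v
  calc (B *ᵥ v) ⬝ᵥ (B *ᵥ v) = ∑ i, (B *ᵥ v) i ^ 2 := by simp only [dotProduct, pow_two]
    _ ≤ ∑ i, (B i ⬝ᵥ B i) * (v ⬝ᵥ v) := Finset.sum_le_sum fun i _ => hrow i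
    _ = (Bᵀ * B).trace * (v ⬝ᵥ v) := by
      rw [← Finset.sum_mul, trace_mul_comm]
      simp only [trace, diag, mul_apply, transpose_apply, dotProduct]

lemma dotProduct_transpose_mul_mulVec (B C : Matrix m n ℝ) (x y : n → ℝ) :
    x ⬝ᵥ (Bᵀ * C) *ᵥ y = (B *ᵥ x) ⬝ᵥ (C *ᵥ y) := by
  rw [← mulVec_mulVec, dotProduct_mulVec, vecMul_transpose]

lemma mul_mulVec_dotProduct_mulVec_mul_mulVec {k : Type*} [Fintype k] (A : Matrix m m ℝ)
    (P : Matrix m n ℝ) (R : Matrix n k ℝ) (v : k → ℝ) :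
    ((P * R) *ᵥ v) ⬝ᵥ A *ᵥ ((P * R) *ᵥ v) = (R *ᵥ v) ⬝ᵥ (Pᵀ * A * P) *ᵥ (R *ᵥ v) := by
  rw [Matrix.mul_assoc, dotProduct_transpose_mul_mulVec]
  simp only [mulVec_mulVec, Matrix.mul_assoc]

end DotProduct

namespace Matrix.PosSemidef

open scoped MatrixOrder

variable {m : Type*} [Fintype m] {M : Matrix m m ℝ}

lemma exists_eq_transpose_mul_self (hM : M.PosSemidef) : ∃ B : Matrix m m ℝ, M = Bᵀ * B := by
  classical
  obtain ⟨B, hB⟩ := CStarAlgebra.nonneg_iff_eq_star_mul_self.mp hM.nonneg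
  exact ⟨B, by rw [hB, star_eq_conjTranspose, conjTranspose_eq_transpose_of_trivial]⟩

lemma dotProduct_mulVec_sq_le (hM : M.PosSemidef) (x y : m → ℝ) :
    (x ⬝ᵥ M *ᵥ y) ^ 2 ≤ (x ⬝ᵥ M *ᵥ x) * (y ⬝ᵥ M *ᵥ y) := by
  obtain ⟨B, rfl⟩ := hM.exists_eq_transpose_mul_self
  simp only [dotProduct_transpose_mul_mulVec]
  exact dotProduct_sq_le_dotProduct_self_mul _ _

lemma dotProduct_mulVec_le_trace_mul (hM : M.PosSemidef) (x : m → ℝ) :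
    x ⬝ᵥ M *ᵥ x ≤ M.trace * (x ⬝ᵥ x) := by
  obtain ⟨B, rfl⟩ := hM.exists_eq_transpose_mul_self
  rw [dotProduct_transpose_mul_mulVec]
  exact mulVec_dotProduct_mulVec_self_le B x

end Matrix.PosSemidef

section OpNormA

variable {m : Type*} [Fintype m]

lemma opNormA_nonneg (A E : Matrix m m ℝ) : 0 ≤ opNormA A E :=
  Real.iSup_nonneg fun _ => div_nonneg (Real.sqrt_nonneg _) (Real.sqrt_nonneg _)

lemma anorm_one [DecidableEq m] (v : m → ℝ) : anorm 1 v = √(v ⬝ᵥ v) := by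
  rw [anorm, one_mulVec]

lemma anorm_one_mulVec_le [DecidableEq m] (E : Matrix m m ℝ) (v : m → ℝ) :
    anorm 1 (E *ᵥ v) ≤ opNormA 1 E * anorm 1 v := by
  rcases eq_or_ne v 0 with rfl | hv
  · simp [anorm]
  have hpos : 0 < anorm 1 v := by
    rw [anorm_one]
    exact Real.sqrt_pos.2 (dotProduct_self_star_pos_iff.2 hv)
  have hbdd : BddAbove (Set.range fun v : {v : m → ℝ // v ≠ 0} =>
      anorm 1 (E *ᵥ v.1) / anorm 1 v.1) := by
    refine ⟨√(Eᵀ * E).trace, Set.forall_mem_range.2 fun w => div_le_of_le_mul₀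
      (Real.sqrt_nonneg _) (Real.sqrt_nonneg _) ?_⟩
    have htr : 0 ≤ (Eᵀ * E).trace := by
      simpa only [conjTranspose_eq_transpose_of_trivial] using
        (posSemidef_conjTranspose_mul_self E).trace_nonneg
    rw [anorm_one, anorm_one, ← Real.sqrt_mul htr]
    exact Real.sqrt_le_sqrt (mulVec_dotProduct_mulVec_self_le E w)
  exact (div_le_iff₀ hpos).1 (le_ciSup hbdd ⟨v, hv⟩)

lemma opNormA_sq_le_of_forall {A E : Matrix m m ℝ} {K : ℝ} (hK : 0 ≤ K)
    (h : ∀ v, (E *ᵥ v) ⬝ᵥ A *ᵥ (E *ᵥ v) ≤ K * (v ⬝ᵥ A *ᵥ v)) : opNormA A E ^ 2 ≤ K := by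
  suffices opNormA A E ≤ √K by
    simpa only [Real.sq_sqrt hK] using pow_le_pow_left₀ (opNormA_nonneg A E) this 2
  refine Real.iSup_le (fun v => div_le_of_le_mul₀ (Real.sqrt_nonneg _) (Real.sqrt_nonneg _) ?_)
    (Real.sqrt_nonneg _)
  rw [anorm, anorm, ← Real.sqrt_mul hK]
  exact Real.sqrt_le_sqrt (h v)

end OpNormA

lemma Matrix.PosDef.dotProduct_self_le_opNormA_inv_mul {m : Type*} [Fintype m] [DecidableEq m]
    {A : Matrix m m ℝ} (hA : A.PosDef) (w : m → ℝ) :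
    w ⬝ᵥ w ≤ opNormA 1 A⁻¹ * (w ⬝ᵥ A *ᵥ w) := by
  set c := opNormA 1 A⁻¹
  have hAw : 0 ≤ w ⬝ᵥ A *ᵥ w := by simpa using hA.posSemidef.dotProduct_mulVec_nonneg w
  have hinv : w ⬝ᵥ A⁻¹ *ᵥ w ≤ c * (w ⬝ᵥ w) := by
    have h := anorm_one_mulVec_le A⁻¹ w
    rw [anorm_one, anorm_one] at h
    calc w ⬝ᵥ A⁻¹ *ᵥ w ≤ √(w ⬝ᵥ w) * √((A⁻¹ *ᵥ w) ⬝ᵥ (A⁻¹ *ᵥ w)) :=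
          dotProduct_le_sqrt_mul_sqrt _ _
      _ ≤ √(w ⬝ᵥ w) * (c * √(w ⬝ᵥ w)) := by gcongr
      _ = c * (w ⬝ᵥ w) := by rw [mul_left_comm, Real.mul_self_sqrt (dotProduct_self_nonneg w)]
  have hAAinv : A *ᵥ (A⁻¹ *ᵥ w) = w := by
    rw [mulVec_mulVec, mul_nonsing_inv _ ((isUnit_iff_isUnit_det A).1 hA.isUnit), one_mulVec]
  -- Cauchy–Schwarz for the `A`-inner product, applied to `w` and `A⁻¹ w`
  have hcs : (w ⬝ᵥ w) ^ 2 ≤ (w ⬝ᵥ A *ᵥ w) * (c * (w ⬝ᵥ w)) := by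
    have h := hA.posSemidef.dotProduct_mulVec_sq_le w (A⁻¹ *ᵥ w)
    rw [hAAinv, dotProduct_comm (A⁻¹ *ᵥ w) w] at h
    exact h.trans (mul_le_mul_of_nonneg_left hinv hAw)
  rcases (dotProduct_self_nonneg w).eq_or_lt with hzero | hpos
  · rw [← hzero]
    exact mul_nonneg (opNormA_nonneg _ _) hAw
  · nlinarith

lemma dotProduct_comp_inr_self_le {α β : Type*} [Fintype α] [Fintype β] (v : α ⊕ β → ℝ) :
    (v ∘ Sum.inr) ⬝ᵥ (v ∘ Sum.inr) ≤ v ⬝ᵥ v := by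
  simp only [dotProduct, Fintype.sum_sum_type, Function.comp_apply]
  exact le_add_of_nonneg_left (Finset.sum_nonneg fun i _ => mul_self_nonneg _)

lemma Rmat_mulVec {nf nc : ℕ} (v : Fin nf ⊕ Fin nc → ℝ) : Rmat *ᵥ v = v ∘ Sum.inr := by
  funext j
  simp [Rmat, mulVec, dotProduct, Fintype.sum_sum_type]

theorem PR_Anorm_le_Ainv_trace_general {nf nc : ℕ}
    (A : Matrix (Fin nf ⊕ Fin nc) (Fin nf ⊕ Fin nc) ℝ) (hA : A.PosDef)
    (W : Matrix (Fin nf) (Fin nc) ℝ) :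
    (opNormA A (Pmat W * Rmat)) ^ 2
      ≤ opNormA (1 : Matrix (Fin nf ⊕ Fin nc) (Fin nf ⊕ Fin nc) ℝ) A⁻¹ *
          Matrix.trace ((Pmat W)ᵀ * A * Pmat W) := by
  set M := (Pmat W)ᵀ * A * Pmat W
  have hM : M.PosSemidef := by
    simpa only [conjTranspose_eq_transpose_of_trivial] using
      hA.posSemidef.conjTranspose_mul_mul_same (Pmat W)
  have htr : 0 ≤ M.trace := hM.trace_nonneg
  refine opNormA_sq_le_of_forall (mul_nonneg (opNormA_nonneg _ _) htr) fun v => ?_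
  calc ((Pmat W * Rmat) *ᵥ v) ⬝ᵥ A *ᵥ ((Pmat W * Rmat) *ᵥ v)
      = (Rmat *ᵥ v) ⬝ᵥ M *ᵥ (Rmat *ᵥ v) := mul_mulVec_dotProduct_mulVec_mul_mulVec _ _ _ _
    _ ≤ M.trace * ((Rmat *ᵥ v) ⬝ᵥ (Rmat *ᵥ v)) := hM.dotProduct_mulVec_le_trace_mul _
    _ ≤ M.trace * (v ⬝ᵥ v) :=
        mul_le_mul_of_nonneg_left (Rmat_mulVec v ▸ dotProduct_comp_inr_self_le v) htr
    _ ≤ M.trace * (opNormA 1 A⁻¹ * (v ⬝ᵥ A *ᵥ v)) :=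
        mul_le_mul_of_nonneg_left (hA.dotProduct_self_le_opNormA_inv_mul v) htr
    _ = opNormA 1 A⁻¹ * M.trace * (v ⬝ᵥ A *ᵥ v) := by ring

theorem PR_Anorm_le_Ainv_trace {nf nc : ℕ}
    (Aff : Matrix (Fin nf) (Fin nf) ℝ) (Afc : Matrix (Fin nf) (Fin nc) ℝ)
    (Acf : Matrix (Fin nc) (Fin nf) ℝ) (Acc : Matrix (Fin nc) (Fin nc) ℝ)
    (A : Matrix (Fin nf ⊕ Fin nc) (Fin nf ⊕ Fin nc) ℝ)
    (hAdef : A = Matrix.fromBlocks Aff Afc Acf Acc) (hA : A.PosDef)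
    (W : Matrix (Fin nf) (Fin nc) ℝ) :
    (opNormA A (Pmat W * Rmat)) ^ 2
      ≤ opNormA (1 : Matrix (Fin nf ⊕ Fin nc) (Fin nf ⊕ Fin nc) ℝ) A⁻¹ *
          Matrix.trace ((Pmat W)ᵀ * A * Pmat W) :=
  PR_Anorm_le_Ainv_trace_general A hA W
end
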